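/- arXiv:1009.5109 — 5 statements merged into one kernel-verified Lean document; each statement's English description precedes it below -/
import Mathlib

section
/- Let R be a commutative ring and M an (m+1)×(n+1) matrix over R such that some entry of M is a unit of R. Then there exist an invertible (m+1)×(m+1) matrix P over R, an invertible (n+1)×(n+1) matrix Q over R, and an m×n matrix M' over R such that P·M·Q is the block matrix whose upper-left 1×1 block is 1, whose off-diagonal blocks are zero, and whose lower-right block is M'. -/
/-!
Permuting rows and columns moves the unit entry to the upper-left corner. Writing the result as
`fromBlocks a b c d` with `a` a `1 × 1` unit, the LDU decomposition
`fromBlocks a b c d = L * fromBlocks a 0 0 (d - c * a⁻¹ * b) * U` with unitriangular `L`, `U`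
clears the off-diagonal blocks, and scaling the first row by `a⁻¹` turns `a` into `1`.
-/

namespace Matrix

variable {R : Type*} [CommRing R] {m n m' n' o : Type*}
  [Fintype m] [Fintype n] [Fintype m'] [Fintype n'] [Fintype o]
  [DecidableEq m] [DecidableEq n] [DecidableEq m'] [DecidableEq n'] [DecidableEq o]

def IsEquiv (M N : Matrix m n R) : Prop :=
  ∃ (P : Matrix m m R) (Q : Matrix n n R), IsUnit P ∧ IsUnit Q ∧ P * M * Q = N

namespace IsEquiv

theorem symm {M N : Matrix m n R} (h : IsEquiv M N) : IsEquiv N M := by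
  obtain ⟨P, Q, hP, hQ, rfl⟩ := h
  refine ⟨↑hP.unit⁻¹, ↑hQ.unit⁻¹, Units.isUnit _, Units.isUnit _, ?_⟩
  simp only [← Matrix.mul_assoc, Units.inv_mul_of_eq hP.unit_spec, Matrix.one_mul]
  simp only [Matrix.mul_assoc, Units.mul_inv_of_eq hQ.unit_spec, Matrix.mul_one]

theorem trans {M N K : Matrix m n R} (h₁ : IsEquiv M N) (h₂ : IsEquiv N K) : IsEquiv M K := by
  obtain ⟨P, Q, hP, hQ, rfl⟩ := h₁
  obtain ⟨P', Q', hP', hQ', rfl⟩ := h₂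
  exact ⟨P' * P, Q * Q', hP'.mul hP, hQ.mul hQ', by simp only [Matrix.mul_assoc]⟩

theorem reindex {M N : Matrix m n R} (h : IsEquiv M N) (e₁ : m ≃ m') (e₂ : n ≃ n') :
    IsEquiv (reindex e₁ e₂ M) (reindex e₁ e₂ N) := by
  obtain ⟨P, Q, hP, hQ, rfl⟩ := h
  refine ⟨Matrix.reindex e₁ e₁ P, Matrix.reindex e₂ e₂ Q, ?_, ?_, ?_⟩
  · simpa [reindex_apply] using hP
  · simpa [reindex_apply] using hQ
  · simp only [reindex_apply, submatrix_mul_equiv]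

end IsEquiv

theorem isUnit_permMatrix (σ : Equiv.Perm n) : IsUnit (σ.permMatrix R) := by
  rw [isUnit_iff_isUnit_det, det_permutation]
  exact (Equiv.Perm.sign σ).isUnit.map (Int.castRingHom R)

theorem isEquiv_submatrix_perm (M : Matrix m n R) (σ : Equiv.Perm m) (τ : Equiv.Perm n) :
    IsEquiv M (M.submatrix σ τ) := by
  refine ⟨σ.permMatrix R, τ⁻¹.permMatrix R, isUnit_permMatrix σ, isUnit_permMatrix τ⁻¹, ?_⟩
  rw [PEquiv.toMatrix_toPEquiv_mul, PEquiv.mul_toMatrix_toPEquiv, submatrix_submatrix]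
  rfl

theorem isEquiv_fromBlocks_one_of_invertible₁₁ (A : Matrix o o R) (B : Matrix o n R)
    (C : Matrix m o R) (D : Matrix m n R) [Invertible A] :
    IsEquiv (fromBlocks A B C D) (fromBlocks 1 0 0 (D - C * ⅟A * B)) := by
  refine IsEquiv.symm ?_
  have hL : IsUnit (fromBlocks 1 0 (C * ⅟A) 1 : Matrix (o ⊕ m) (o ⊕ m) R) := by simp
  have hU : IsUnit (fromBlocks 1 (⅟A * B) 0 1 : Matrix (o ⊕ n) (o ⊕ n) R) := by simp
  have hA : IsUnit (fromBlocks A 0 0 1 : Matrix (o ⊕ m) (o ⊕ m) R) := by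
    simpa using isUnit_of_invertible A
  refine ⟨_ * fromBlocks A 0 0 1, _, hL.mul hA, hU, ?_⟩
  rw [fromBlocks_eq_of_invertible₁₁ A B C D, Matrix.mul_assoc _ (fromBlocks A 0 0 1),
    fromBlocks_multiply]
  simp

theorem exists_isEquiv_fromBlocks_one [Unique o] (M : Matrix (o ⊕ m) (o ⊕ n) R)
    (h : ∃ i j, IsUnit (M i j)) : ∃ S : Matrix m n R, IsEquiv M (fromBlocks 1 0 0 S) := by
  obtain ⟨i, j, hij⟩ := h
  set σ := Equiv.swap (.inl default) i
  set τ := Equiv.swap (.inl default) j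
  set N := M.submatrix σ τ
  have : Invertible N.toBlocks₁₁ := invertibleOfIsUnitDet _ <| by
    simpa [det_unique, N, σ, τ, toBlocks₁₁] using hij
  have hN := isEquiv_fromBlocks_one_of_invertible₁₁ N.toBlocks₁₁ N.toBlocks₁₂ N.toBlocks₂₁
    N.toBlocks₂₂
  rw [fromBlocks_toBlocks] at hN
  exact ⟨_, (isEquiv_submatrix_perm M σ τ).trans hN⟩

end Matrix

open Matrix

/-- If some entry of an `(m+1) × (n+1)` matrix `M` is a unit, then `M` is equivalent, via
invertible row and column operations, to a block matrix with upper-left `1 × 1` block `1`,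
zero off-diagonal blocks, and some lower-right `m × n` block `M'`. -/
theorem exists_unit_entry_block_reduction {R : Type*} [CommRing R] {m n : ℕ}
    (M : Matrix (Fin (m + 1)) (Fin (n + 1)) R) (h : ∃ i j, IsUnit (M i j)) :
    ∃ (P : Matrix (Fin (m + 1)) (Fin (m + 1)) R) (Q : Matrix (Fin (n + 1)) (Fin (n + 1)) R)
      (M' : Matrix (Fin m) (Fin n) R), IsUnit P ∧ IsUnit Q ∧
      P * M * Q = Matrix.reindex (finSumFinEquiv.trans (finCongr (Nat.add_comm 1 m)))
        (finSumFinEquiv.trans (finCongr (Nat.add_comm 1 n)))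
        (Matrix.fromBlocks (1 : Matrix (Fin 1) (Fin 1) R) 0 0 M') := by
  set e₁ : Fin 1 ⊕ Fin m ≃ Fin (m + 1) := finSumFinEquiv.trans (finCongr (Nat.add_comm 1 m))
  set e₂ : Fin 1 ⊕ Fin n ≃ Fin (n + 1) := finSumFinEquiv.trans (finCongr (Nat.add_comm 1 n))
  have hunit : ∃ i j, IsUnit (M.submatrix e₁ e₂ i j) := by
    obtain ⟨i, j, hij⟩ := h
    exact ⟨e₁.symm i, e₂.symm j, by simpa using hij⟩
  obtain ⟨M', hM'⟩ := exists_isEquiv_fromBlocks_one (M.submatrix e₁ e₂) hunit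
  obtain ⟨P, Q, hP, hQ, hPQ⟩ := hM'.reindex e₁ e₂
  exact ⟨P, Q, M', hP, hQ, by simpa using hPQ⟩
end

section
/- Let R be a local integral domain, and let M be an (m+1)×(n+1) matrix over R. Let p be a nonzero element of R such that the ideal generated by the entries of M is the principal ideal generated by p (that is, I_0(M) = ⟨p⟩). Then there exist an invertible (m+1)×(m+1) matrix P over R, an invertible (n+1)×(n+1) matrix Q over R, and an m×n matrix M' over R such that P·M·Q is the block matrix whose upper-left 1×1 block is p, whose off-diagonal blocks are zero, and whose lower-right block is M', and moreover p divides every entry of M'. -/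
/-- The `r`-determinantal ideal of a matrix `M`: the ideal generated by the determinants of
all `(r+1) × (r+1)` submatrices of `M`. -/
def detIdeal {R : Type*} [CommRing R] {ι κ : Type*} (M : Matrix ι κ R) (r : ℕ) : Ideal R :=
  Ideal.span { x | ∃ (f : Fin (r + 1) → ι) (g : Fin (r + 1) → κ),
    Function.Injective f ∧ Function.Injective g ∧ x = (M.submatrix f g).det }

open Matrix in
/-- The key block-reduction computation, assuming the pivot is at position `(0,0)`. -/
lemma block_reduce_aux {R : Type*} [CommRing R] {m n : ℕ}
    (N : Matrix (Fin (m + 1)) (Fin (n + 1)) R) (p : R)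
    (D : Matrix (Fin (m + 1)) (Fin (n + 1)) R) (hD : ∀ i j, N i j = p * D i j)
    (u : Rˣ) (hu : (u : R) = D 0 0) :
    ∃ (P : Matrix (Fin (m + 1)) (Fin (m + 1)) R) (Q : Matrix (Fin (n + 1)) (Fin (n + 1)) R)
      (M' : Matrix (Fin m) (Fin n) R), IsUnit P ∧ IsUnit Q ∧
      P * N * Q = Matrix.reindex (finSumFinEquiv.trans (finCongr (Nat.add_comm 1 m)))
        (finSumFinEquiv.trans (finCongr (Nat.add_comm 1 n)))
        (Matrix.fromBlocks (Matrix.of fun _ _ => p) 0 0 M') ∧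
      ∀ i j, p ∣ M' i j := by
  have huu : ((u⁻¹ : Rˣ) : R) * (u : R) = 1 := Units.inv_mul u
  -- row clearing matrix: 1 + F with F nilpotent
  set F : Matrix (Fin (m + 1)) (Fin (m + 1)) R := Matrix.of fun i k =>
    if k = 0 ∧ i ≠ 0 then -(D i 0) else 0 with hF
  -- scaling matrix
  set S : Matrix (Fin (m + 1)) (Fin (m + 1)) R :=
    Matrix.diagonal (fun i => if i = 0 then ((u⁻¹ : Rˣ) : R) else 1) with hS
  set S' : Matrix (Fin (m + 1)) (Fin (m + 1)) R :=
    Matrix.diagonal (fun i => if i = 0 then (u : R) else 1) with hS'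
  -- column clearing matrix: 1 + E with E nilpotent
  set E : Matrix (Fin (n + 1)) (Fin (n + 1)) R := Matrix.of fun k j =>
    if k = 0 ∧ j ≠ 0 then -(((u⁻¹ : Rˣ) : R) * D 0 j) else 0 with hE
  have hFF : F * F = 0 := by
    ext i j
    rw [Matrix.mul_apply]
    apply Finset.sum_eq_zero
    intro k _
    rcases eq_or_ne k 0 with rfl | hk
    · simp [hF]
    · simp [hF, hk]
  have hEE : E * E = 0 := by
    ext i j
    rw [Matrix.mul_apply]
    apply Finset.sum_eq_zero
    intro k _
    rcases eq_or_ne k 0 with rfl | hk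
    · simp [hE]
    · simp [hE, hk]
  have hFunit : IsUnit (1 + F) := by
    have h1 : (1 + F) * (1 - F) = 1 := by
      rw [mul_one_sub, add_mul, one_mul, add_sub_assoc, hFF]
      simp
    exact ⟨⟨1 + F, 1 - F, h1, mul_eq_one_comm.mp h1⟩, rfl⟩
  have hEunit : IsUnit (1 + E) := by
    have h1 : (1 + E) * (1 - E) = 1 := by
      rw [mul_one_sub, add_mul, one_mul, add_sub_assoc, hEE]
      simp
    exact ⟨⟨1 + E, 1 - E, h1, mul_eq_one_comm.mp h1⟩, rfl⟩
  have hSunit : IsUnit S := by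
    have h1 : S * S' = 1 := by
      rw [hS, hS', Matrix.diagonal_mul_diagonal]
      have hptwise : ∀ i : Fin (m + 1),
          (if i = 0 then ((u⁻¹ : Rˣ) : R) else 1) * (if i = 0 then (u : R) else 1) = 1 := by
        intro i
        rcases eq_or_ne i 0 with rfl | hi
        · simp [huu]
        · simp [hi]
      simp only [hptwise]
      exact Matrix.diagonal_one
    exact ⟨⟨S, S', h1, mul_eq_one_comm.mp h1⟩, rfl⟩
  set Y : Matrix (Fin (m + 1)) (Fin (n + 1)) R := (1 + F) * S * N with hYdef
  set Z : Matrix (Fin (m + 1)) (Fin (n + 1)) R := Y * (1 + E) with hZdef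
  refine ⟨(1 + F) * S, (1 + E),
    Matrix.of (fun i j => p * (D i.succ j.succ - D i.succ 0 * ((u⁻¹ : Rˣ) : R) * D 0 j.succ)),
    hFunit.mul hSunit, hEunit, ?_, fun i j => Dvd.intro _ rfl⟩
  -- compute the entries of Y := (1 + F) * S * N
  have hY : ∀ (i : Fin (m + 1)) (j : Fin (n + 1)), Y i j =
      if i = 0 then ((u⁻¹ : Rˣ) : R) * N 0 j
      else N i j - D i 0 * (((u⁻¹ : Rˣ) : R) * N 0 j) := by
    intro i j
    have hsum : ∀ k : Fin (m + 1), F i k * (S * N) k j =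
        if k = 0 then F i 0 * (S * N) 0 j else 0 := by
      intro k
      rcases eq_or_ne k 0 with rfl | hk
      · simp [hF]
      · simp [hF, hk]
    have hFSN : (F * (S * N)) i j = F i 0 * (S * N) 0 j := by
      rw [Matrix.mul_apply, Finset.sum_congr rfl fun k _ => hsum k,
        Finset.sum_ite_eq' Finset.univ (0 : Fin (m + 1))]
      simp
    have hSNapp : ∀ (i' : Fin (m + 1)) (j' : Fin (n + 1)),
        (S * N) i' j' = (if i' = 0 then ((u⁻¹ : Rˣ) : R) else 1) * N i' j' := by
      intro i' j'
      rw [hS, Matrix.diagonal_mul]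
    rw [hYdef, Matrix.mul_assoc, Matrix.add_mul, Matrix.one_mul, Matrix.add_apply, hFSN,
      hSNapp, hSNapp]
    rcases eq_or_ne i 0 with rfl | hi
    · simp [hF]
    · simp only [hF, Matrix.of_apply, hi, if_neg hi, ne_eq, not_false_eq_true, and_true,
        if_pos rfl, if_true, if_false, ite_true, ite_false]
      ring
  have hYE : ∀ (i : Fin (m + 1)) (j : Fin (n + 1)), Z i j = Y i j + Y i 0 * E 0 j := by
    intro i j
    have hsum : ∀ k : Fin (n + 1), Y i k * E k j =
        if k = 0 then Y i 0 * E 0 j else 0 := by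
      intro k
      rcases eq_or_ne k 0 with rfl | hk
      · simp [hE]
      · simp [hE, hk]
    have hYEapp : (Y * E) i j = Y i 0 * E 0 j := by
      rw [Matrix.mul_apply, Finset.sum_congr rfl fun k _ => hsum k,
        Finset.sum_ite_eq' Finset.univ (0 : Fin (n + 1))]
      simp
    rw [hZdef, Matrix.mul_add, Matrix.mul_one, Matrix.add_apply, hYEapp]
  -- now prove the matrix identity
  rw [show (1 + F) * S * N * (1 + E) = Z from by rw [hZdef, hYdef]]
  rw [← Equiv.symm_apply_eq, Matrix.reindex_symm]
  ext i j
  have e1l : ∀ z : Fin 1, (finSumFinEquiv.trans (finCongr (Nat.add_comm 1 m))) (Sum.inl z)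
      = (0 : Fin (m + 1)) := by
    intro z
    apply Fin.ext
    have := z.isLt
    simp only [Equiv.trans_apply, finSumFinEquiv_apply_left, finCongr_apply, Fin.coe_cast,
      Fin.coe_castAdd, Fin.val_zero]
    omega
  have e1r : ∀ k : Fin m, (finSumFinEquiv.trans (finCongr (Nat.add_comm 1 m))) (Sum.inr k)
      = k.succ := by
    intro k
    apply Fin.ext
    simp only [Equiv.trans_apply, finSumFinEquiv_apply_right, finCongr_apply, Fin.coe_cast,
      Fin.coe_natAdd, Fin.val_succ]
    omega
  have e2l : ∀ z : Fin 1, (finSumFinEquiv.trans (finCongr (Nat.add_comm 1 n))) (Sum.inl z)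
      = (0 : Fin (n + 1)) := by
    intro z
    apply Fin.ext
    have := z.isLt
    simp only [Equiv.trans_apply, finSumFinEquiv_apply_left, finCongr_apply, Fin.coe_cast,
      Fin.coe_castAdd, Fin.val_zero]
    omega
  have e2r : ∀ k : Fin n, (finSumFinEquiv.trans (finCongr (Nat.add_comm 1 n))) (Sum.inr k)
      = k.succ := by
    intro k
    apply Fin.ext
    simp only [Equiv.trans_apply, finSumFinEquiv_apply_right, finCongr_apply, Fin.coe_cast,
      Fin.coe_natAdd, Fin.val_succ]
    omega
  rw [Matrix.reindex_apply, Matrix.submatrix_apply, Equiv.symm_symm, Equiv.symm_symm]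
  obtain i | i := i <;> obtain j | j := j
  · rw [e1l, e2l]
    simp only [hYE, hY]
    simp [hE]
    rw [hD 0 0, ← hu]
    linear_combination p * huu
  · rw [e1l, e2r]
    simp only [hYE, hY]
    simp [hE, Fin.succ_ne_zero]
    rw [hD 0 j.succ, hD 0 0, ← hu]
    linear_combination (-(((u⁻¹ : Rˣ) : R) * p * D 0 j.succ)) * huu
  · rw [e1r, e2l]
    simp only [hYE, hY]
    simp [hE, Fin.succ_ne_zero]
    rw [hD i.succ 0, hD 0 0, ← hu]
    linear_combination (-(D i.succ 0 * p)) * huu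
  · rw [e1r, e2r]
    simp only [hYE, hY]
    simp [hE, Fin.succ_ne_zero]
    rw [hD i.succ j.succ, hD i.succ 0, hD 0 j.succ, hD 0 0, ← hu]
    linear_combination (p * D i.succ 0 * ((u⁻¹ : Rˣ) : R) * D 0 j.succ) * huu

/-- Over a local domain, if the ideal of entries of an `(m+1) × (n+1)` matrix `M` is the
principal ideal `⟨p⟩` with `p ≠ 0`, then `M` is equivalent, via invertible row and column
operations, to a block matrix with upper-left `1 × 1` block `p`, zero off-diagonal blocks,
and a lower-right block `M'` all of whose entries are divisible by `p`. -/
theorem exists_block_reduction_of_detIdeal_zero_principal {R : Type*} [CommRing R]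
    [IsLocalRing R] [IsDomain R] {m n : ℕ}
    (M : Matrix (Fin (m + 1)) (Fin (n + 1)) R) (p : R) (hp : p ≠ 0)
    (h : detIdeal M 0 = Ideal.span {p}) :
    ∃ (P : Matrix (Fin (m + 1)) (Fin (m + 1)) R) (Q : Matrix (Fin (n + 1)) (Fin (n + 1)) R)
      (M' : Matrix (Fin m) (Fin n) R), IsUnit P ∧ IsUnit Q ∧
      P * M * Q = Matrix.reindex (finSumFinEquiv.trans (finCongr (Nat.add_comm 1 m)))
        (finSumFinEquiv.trans (finCongr (Nat.add_comm 1 n)))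
        (Matrix.fromBlocks (Matrix.of fun _ _ => p) 0 0 M') ∧
      ∀ i j, p ∣ M' i j := by
  -- the generating set of `detIdeal M 0` is exactly the set of entries of `M`
  have hset : { x | ∃ (f : Fin 1 → Fin (m + 1)) (g : Fin 1 → Fin (n + 1)),
      Function.Injective f ∧ Function.Injective g ∧ x = (M.submatrix f g).det }
      = Set.range (fun ij : Fin (m + 1) × Fin (n + 1) => M ij.1 ij.2) := by
    ext x
    constructor
    · rintro ⟨f, g, -, -, rfl⟩
      exact ⟨(f 0, g 0), by simp [Matrix.det_fin_one]⟩
    · rintro ⟨⟨i, j⟩, rfl⟩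
      exact ⟨fun _ => i, fun _ => j, fun a b _ => by omega, fun a b _ => by omega,
        by simp [Matrix.det_fin_one]⟩
  -- every entry is divisible by p
  have hdvd : ∀ i j, M i j ∈ Ideal.span ({p} : Set R) := by
    intro i j
    rw [← h]
    exact Ideal.subset_span ⟨fun _ => i, fun _ => j, fun a b _ => by omega, fun a b _ => by omega,
      by simp [Matrix.det_fin_one]⟩
  choose D hD using fun i j => Ideal.mem_span_singleton'.mp (hdvd i j)
  -- p is a combination of the entries
  have hpmem : p ∈ Ideal.span (Set.range (fun ij : Fin (m + 1) × Fin (n + 1) => M ij.1 ij.2)) := by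
    rw [← hset]
    rw [show Ideal.span _ = detIdeal M 0 from rfl, h]
    exact Ideal.mem_span_singleton_self p
  rw [Ideal.mem_span_range_iff_exists_fun] at hpmem
  obtain ⟨c, hc⟩ := hpmem
  -- hence ∑ c ij * D ij = 1, so some D ij is a unit (local ring)
  have hone : ∑ ij : Fin (m + 1) × Fin (n + 1), c ij * D ij.1 ij.2 = 1 := by
    apply mul_left_cancel₀ hp
    rw [mul_one, Finset.mul_sum]
    calc ∑ ij : Fin (m + 1) × Fin (n + 1), p * (c ij * D ij.1 ij.2)
        = ∑ ij : Fin (m + 1) × Fin (n + 1), c ij * M ij.1 ij.2 := by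
          refine Finset.sum_congr rfl fun ij _ => ?_
          rw [← hD ij.1 ij.2]
          ring
      _ = p := hc
  have hexu : ∃ ij : Fin (m + 1) × Fin (n + 1), IsUnit (c ij * D ij.1 ij.2) := by
    by_contra hcon
    push_neg at hcon
    have hmem : (1 : R) ∈ IsLocalRing.maximalIdeal R := by
      rw [← hone]
      exact Ideal.sum_mem _ fun ij _ => hcon ij
    exact (IsLocalRing.maximalIdeal.isMaximal R).ne_top ((Ideal.eq_top_iff_one _).mpr hmem)
  obtain ⟨⟨i₀, j₀⟩, hij₀⟩ := hexu
  have hDunit : IsUnit (D i₀ j₀) := isUnit_of_mul_isUnit_right hij₀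
  obtain ⟨u, hu⟩ := hDunit
  -- move the pivot to position (0,0) by permutations
  set σ : Equiv.Perm (Fin (m + 1)) := Equiv.swap 0 i₀ with hσ
  set τ : Equiv.Perm (Fin (n + 1)) := Equiv.swap 0 j₀ with hτ
  set Pσ : Matrix (Fin (m + 1)) (Fin (m + 1)) R := σ.toPEquiv.toMatrix with hPσ
  set Qτ : Matrix (Fin (n + 1)) (Fin (n + 1)) R := τ.symm.toPEquiv.toMatrix with hQτ
  have hNsub : Pσ * M * Qτ = M.submatrix σ τ := by
    rw [hPσ, hQτ, PEquiv.toMatrix_toPEquiv_mul, PEquiv.mul_toMatrix_toPEquiv, Equiv.symm_symm]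
    rfl
  have hperm1 : IsUnit Pσ := by
    have h1 : Pσ * (σ.symm.toPEquiv.toMatrix : Matrix (Fin (m + 1)) (Fin (m + 1)) R) = 1 := by
      rw [hPσ, ← PEquiv.toMatrix_trans, ← Equiv.toPEquiv_trans, Equiv.self_trans_symm,
        Equiv.toPEquiv_refl, PEquiv.toMatrix_refl]
    exact ⟨⟨_, _, h1, mul_eq_one_comm.mp h1⟩, rfl⟩
  have hperm2 : IsUnit Qτ := by
    have h1 : Qτ * (τ.toPEquiv.toMatrix : Matrix (Fin (n + 1)) (Fin (n + 1)) R) = 1 := by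
      rw [hQτ, ← PEquiv.toMatrix_trans, ← Equiv.toPEquiv_trans, Equiv.symm_trans_self,
        Equiv.toPEquiv_refl, PEquiv.toMatrix_refl]
    exact ⟨⟨_, _, h1, mul_eq_one_comm.mp h1⟩, rfl⟩
  -- apply the pivot-at-(0,0) lemma to the permuted matrix
  have hpivot : (u : R) = (Matrix.of fun i j => D (σ i) (τ j)) 0 0 := by
    simp [hσ, hτ, Equiv.swap_apply_left, hu]
  obtain ⟨P, Q, M', hP, hQ, heq, hdvd'⟩ := block_reduce_aux (M.submatrix σ τ) p
    (Matrix.of fun i j => D (σ i) (τ j))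
    (fun i j => (hD (σ i) (τ j)).symm.trans (mul_comm _ _)) u hpivot
  refine ⟨P * Pσ, Qτ * Q, M', hP.mul hperm1, hperm2.mul hQ, ?_, hdvd'⟩
  have hassoc : P * Pσ * M * (Qτ * Q) = P * (Pσ * M * Qτ) * Q := by
    rw [← Matrix.mul_assoc (P * Pσ * M) Qτ Q, Matrix.mul_assoc P Pσ M,
      Matrix.mul_assoc P (Pσ * M) Qτ]
  rw [hassoc, hNsub]
  exact heq
end

section
/- Let R be a commutative ring, l a natural number, and p_0, …, p_{l-1} elements of R such that p_i divides p_{i+1} for 0 ≤ i ≤ l−2. Let M be the q×p block matrix whose upper-left l×l block is the diagonal matrix diag(p_0, …, p_{l-1}) and whose other blocks are zero (with l ≤ min(q,p)). Then for every natural number r with r < l, the r-determinantal ideal of M is the principal ideal generated by the product p_0·p_1⋯p_r, and for every r ≥ l the r-determinantal ideal of M is the zero ideal. -/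
/-- The `q × p` block matrix whose upper-left `l × l` block is `Matrix.diagonal d` and whose
other blocks are zero. -/
noncomputable def blockDiag {R : Type*} [CommRing R] {q p l : ℕ} (hq : l ≤ q) (hp : l ≤ p)
    (d : Fin l → R) : Matrix (Fin q) (Fin p) R :=
  Matrix.reindex (finSumFinEquiv.trans (finCongr (Nat.add_sub_cancel' hq)))
    (finSumFinEquiv.trans (finCongr (Nat.add_sub_cancel' hp)))
    (Matrix.fromBlocks (Matrix.diagonal d) 0 0 0)


section Aux
variable {R : Type*} [CommRing R]

lemma blockDiag_apply'' {q p l : ℕ} (hq : l ≤ q) (hp : l ≤ p)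
    (d : Fin l → R) (i : Fin q) (j : Fin p) :
    blockDiag hq hp d i j =
      if h : (i : ℕ) < l ∧ (i : ℕ) = (j : ℕ) then d ⟨i, h.1⟩ else 0 := by
  rw [blockDiag]
  rw [Matrix.reindex_apply, Matrix.submatrix_apply]
  rcases lt_or_ge (i : ℕ) l with hi | hi
  · have e1 : (finSumFinEquiv.trans (finCongr (Nat.add_sub_cancel' hq))).symm i
        = Sum.inl ⟨i, hi⟩ := by
      rw [Equiv.symm_apply_eq]
      ext
      simp [finSumFinEquiv_apply_left]
    rw [e1]
    rcases lt_or_ge (j : ℕ) l with hj | hj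
    · have e2 : (finSumFinEquiv.trans (finCongr (Nat.add_sub_cancel' hp))).symm j
          = Sum.inl ⟨j, hj⟩ := by
        rw [Equiv.symm_apply_eq]; ext; simp [finSumFinEquiv_apply_left]
      rw [e2]
      by_cases hij : (i : ℕ) = (j : ℕ)
      · rw [dif_pos ⟨hi, hij⟩]
        simp [Matrix.fromBlocks, Matrix.diagonal_apply, Fin.ext_iff, hij]
      · rw [dif_neg (by tauto)]
        simp [Matrix.fromBlocks, Matrix.diagonal_apply, Fin.ext_iff, hij]
    · have e2 : (finSumFinEquiv.trans (finCongr (Nat.add_sub_cancel' hp))).symm j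
          = Sum.inr ⟨(j : ℕ) - l, by omega⟩ := by
        rw [Equiv.symm_apply_eq]; ext; simp [finSumFinEquiv_apply_right]; omega
      rw [e2, dif_neg (by omega)]
      simp [Matrix.fromBlocks]
  · have e1 : (finSumFinEquiv.trans (finCongr (Nat.add_sub_cancel' hq))).symm i
        = Sum.inr ⟨(i : ℕ) - l, by omega⟩ := by
      rw [Equiv.symm_apply_eq]; ext; simp [finSumFinEquiv_apply_right]; omega
    rw [e1, dif_neg (by omega)]
    cases (finSumFinEquiv.trans (finCongr (Nat.add_sub_cancel' hp))).symm j <;>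
      simp [Matrix.fromBlocks]


lemma dvd_mono {l : ℕ} (d : Fin l → R)
    (hchain : ∀ (i : Fin l) (hi : (i : ℕ) + 1 < l), d i ∣ d ⟨(i : ℕ) + 1, hi⟩)
    (i j : Fin l) (hij : i ≤ j) : d i ∣ d j := by
  obtain ⟨n, hn⟩ : ∃ n, (j : ℕ) = (i : ℕ) + n := ⟨j - i, by omega⟩
  clear hij
  induction n generalizing j with
  | zero => have : i = j := by ext; omega
            rw [this]
  | succ n ih =>
      have hlt : (i : ℕ) + n < l := by omega
      refine (ih ⟨(i : ℕ) + n, hlt⟩ rfl).trans ?_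
      have hj1 : (i : ℕ) + n + 1 < l := by omega
      have h2 := hchain ⟨(i : ℕ) + n, hlt⟩ (by simpa using hj1)
      have h3 : j = ⟨(⟨(i : ℕ) + n, hlt⟩ : Fin l) + 1, by simpa using hj1⟩ := by
        ext; simp; omega
      rwa [← h3] at h2

lemma strictMono_nat_le {n l : ℕ} (v : Fin n → Fin l) (hv : StrictMono v) (k : Fin n) :
    (k : ℕ) ≤ (v k : ℕ) := by
  obtain ⟨kv, hk⟩ := k
  induction kv with
  | zero => simp
  | succ m ih =>
      have h1 : m < n := by omega
      have h2 := hv (show (⟨m, h1⟩ : Fin n) < ⟨m + 1, hk⟩ by simp [Fin.lt_def])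
      have h3 := ih h1
      simp only [Fin.lt_def, Fin.val_mk] at *
      omega

lemma prod_dvd_of_inj {l r : ℕ} (d : Fin l → R)
    (hmono : ∀ i j : Fin l, i ≤ j → d i ∣ d j) (hr : r < l)
    (e : Fin (r + 1) → Fin l) (he : Function.Injective e) :
    ∏ k : Fin (r + 1), d (Fin.castLE hr k) ∣ ∏ i : Fin (r + 1), d (e i) := by
  set s : Finset (Fin l) := Finset.image e Finset.univ with hs
  have hcard : s.card = r + 1 := by
    rw [hs, Finset.card_image_of_injective _ he, Finset.card_univ, Fintype.card_fin]
  set m := s.orderIsoOfFin hcard with hm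
  have h1 : ∏ i : Fin (r + 1), d (e i) = ∏ k : Fin (r + 1), d (m k) := by
    rw [← Finset.prod_image (f := d) (g := e) (fun i _ j _ h => he h), ← hs,
      ← Finset.prod_coe_sort]
    exact (Equiv.prod_comp m.toEquiv (fun x : s => d x)).symm
  rw [h1]
  refine Finset.prod_dvd_prod_of_dvd _ _ (fun k _ => hmono _ _ ?_)
  have hsm : StrictMono (fun k : Fin (r + 1) => ((m k : Fin l))) :=
    fun a b hab => (Finset.orderIsoOfFin s hcard).strictMono hab
  have := strictMono_nat_le _ hsm k
  simp only [Fin.le_def, Fin.coe_castLE]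
  exact this

end Aux

/-- For the block matrix `diag (d 0, …, d (l-1)) ⊕ 0` with `d i ∣ d (i+1)`, the
`r`-determinantal ideal is `⟨d 0 ⋯ d r⟩` for `r < l`, and is zero for `r ≥ l`. -/
theorem detIdeal_blockDiag {R : Type*} [CommRing R] {q p l : ℕ} (hq : l ≤ q) (hp : l ≤ p)
    (d : Fin l → R)
    (hchain : ∀ (i : Fin l) (hi : (i : ℕ) + 1 < l), d i ∣ d ⟨(i : ℕ) + 1, hi⟩) :
    (∀ (r : ℕ) (hr : r < l), detIdeal (blockDiag hq hp d) r =
      Ideal.span {∏ i : Fin (r + 1), d (Fin.castLE hr i)}) ∧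
    (∀ r : ℕ, l ≤ r → detIdeal (blockDiag hq hp d) r = ⊥) := by
  have hM := blockDiag_apply'' hq hp d
  constructor
  · intro r hr
    apply le_antisymm
    · rw [detIdeal, Ideal.span_le]
      rintro x ⟨f, g, hf, hg, rfl⟩
      rw [SetLike.mem_coe, Ideal.mem_span_singleton, Matrix.det_apply']
      refine Finset.dvd_sum fun σ _ => ?_
      by_cases hall : ∀ i : Fin (r + 1), ((f (σ i)) : ℕ) < l ∧ ((f (σ i)) : ℕ) = ((g i) : ℕ)
      · set e : Fin (r + 1) → Fin l := fun i => ⟨f (σ i), (hall i).1⟩ with he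
        have heinj : Function.Injective e := by
          intro a b hab
          have h1 := congrArg Fin.val hab
          exact σ.injective (hf (Fin.ext h1))
        have hprod : ∏ i, ((blockDiag hq hp d).submatrix f g) (σ i) i = ∏ i, d (e i) := by
          refine Finset.prod_congr rfl fun i _ => ?_
          rw [Matrix.submatrix_apply, hM, dif_pos (hall i)]
        rw [hprod]
        exact Dvd.dvd.mul_left (prod_dvd_of_inj d (dvd_mono d hchain) hr e heinj) _
      · obtain ⟨i, hi⟩ := not_forall.mp hall
        have hz : ((blockDiag hq hp d).submatrix f g) (σ i) i = 0 := by
          rw [Matrix.submatrix_apply, hM, dif_neg hi]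
        have hz2 : ∏ i, ((blockDiag hq hp d).submatrix f g) (σ i) i = 0 :=
          Finset.prod_eq_zero (Finset.mem_univ i) hz
        rw [hz2, mul_zero]
        exact dvd_zero _
    · rw [Ideal.span_le, Set.singleton_subset_iff]
      have hrl : r + 1 ≤ l := hr
      set f : Fin (r + 1) → Fin q := Fin.castLE (hrl.trans hq) with hfdef
      set g : Fin (r + 1) → Fin p := Fin.castLE (hrl.trans hp) with hgdef
      have hsub : (blockDiag hq hp d).submatrix f g
          = Matrix.diagonal (fun i => d (Fin.castLE hr i)) := by
        ext i j
        rw [Matrix.submatrix_apply, hM, Matrix.diagonal_apply]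
        by_cases hij : i = j
        · subst hij
          rw [dif_pos ⟨by simp [hfdef]; omega, rfl⟩, if_pos rfl]
          exact congrArg d (by ext; simp [hfdef])
        · rw [dif_neg (by simp [hfdef, hgdef, Fin.ext_iff] at hij ⊢; omega), if_neg hij]
      refine Ideal.subset_span ⟨f, g, Fin.castLE_injective _, Fin.castLE_injective _, ?_⟩
      rw [hsub, Matrix.det_diagonal]
  · intro r hrl
    rw [detIdeal, Ideal.span_eq_bot]
    rintro x ⟨f, g, hf, hg, rfl⟩
    by_cases hall : ∀ k : Fin (r + 1), ((f k) : ℕ) < l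
    · exfalso
      have hinj : Function.Injective (fun k : Fin (r + 1) => (⟨f k, hall k⟩ : Fin l)) := by
        intro a b hab
        have h1 := congrArg Fin.val hab
        exact hf (Fin.ext h1)
      have := Fintype.card_le_of_injective _ hinj
      simp at this; omega
    · obtain ⟨k, hk⟩ := not_forall.mp hall
      apply Matrix.det_eq_zero_of_row_eq_zero k
      intro j
      rw [Matrix.submatrix_apply, hM, dif_neg (by tauto)]
end

section
/- Let R be a commutative ring and let M be a q×p matrix over R that is diagonalizable with divisibility chain p_0, …, p_{l-1}. Then for every natural number r with r < l, the r-determinantal ideal I_r(M) is the principal ideal of R generated by p_0·p_1⋯p_r, and for every r ≥ l it is the zero ideal. In particular, every determinantal ideal of a diagonalizable matrix is principal. -/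
/-- A `q × p` matrix `M` over `R` is diagonalizable with divisibility chain `d 0, …, d (l-1)`:
there are invertible matrices `P ∈ GL(q,R)` and `Q ∈ GL(p,R)` such that `P * M * Q` is the
block matrix with upper-left `l × l` block `diag (d 0, …, d (l-1))` and zero elsewhere, where
the `d i` are nonzero and `d i ∣ d (i+1)`. -/
def IsDiagonalizableWithChain {R : Type*} [CommRing R] {q p : ℕ}
    (M : Matrix (Fin q) (Fin p) R) (l : ℕ) (d : Fin l → R) : Prop :=
  ∃ (hq : l ≤ q) (hp : l ≤ p) (P : Matrix (Fin q) (Fin q) R) (Q : Matrix (Fin p) (Fin p) R),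
    IsUnit P ∧ IsUnit Q ∧ (∀ i, d i ≠ 0) ∧
    (∀ (i : Fin l) (hi : (i : ℕ) + 1 < l), d i ∣ d ⟨(i : ℕ) + 1, hi⟩) ∧
    P * M * Q = blockDiag hq hp d

/-!
Multiplying a matrix on either side can only shrink its determinantal ideals: by multilinearity
of the determinant in the rows, every minor of `A * M` is an `R`-combination of minors of `M`.
Hence `I_r` is invariant under `M ↦ P * M * Q` for invertible `P`, `Q`, and we may replace `M`
by its block-diagonal normal form. Each nonzero term in the Leibniz expansion of a minor of that
form is a product of `r + 1` diagonal entries with distinct indices, and these products generate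
`I_r`. Along a divisibility chain the product of the first `r + 1` entries divides all of them and
is one of them; when `r ≥ l` there are no `r + 1` distinct indices at all.
-/

open Matrix

section

variable {R : Type*} [CommRing R]

theorem det_mul_eq_sum_prod_mul_det_submatrix {m n : Type*} [Fintype m] [DecidableEq m]
    [Fintype n] (A : Matrix m n R) (B : Matrix n m R) :
    (A * B).det = ∑ p : m → n, (∏ i, A i (p i)) * (B.submatrix p id).det := by
  classical
  have hrows : A * B = fun i => ∑ j, A i j • B j := by
    ext i k
    simp [mul_apply, Finset.sum_apply]
  change detRowAlternating (A * B) = _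
  rw [hrows]
  exact (detRowAlternating.toMultilinearMap.map_sum _).trans
    (Finset.sum_congr rfl fun p _ => detRowAlternating.toMultilinearMap.map_smul_univ _ _)

theorem detIdeal_submatrix_le {ι κ ι' κ' : Type*} (M : Matrix ι κ R) (r : ℕ)
    {u : ι' → ι} {v : κ' → κ} (hu : Function.Injective u) (hv : Function.Injective v) :
    detIdeal (M.submatrix u v) r ≤ detIdeal M r := by
  rw [detIdeal, Ideal.span_le]
  rintro _ ⟨f, g, hf, hg, rfl⟩
  exact Ideal.subset_span ⟨u ∘ f, v ∘ g, hu.comp hf, hv.comp hg, by simp⟩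

theorem detIdeal_submatrix_equiv {ι κ ι' κ' : Type*} (M : Matrix ι κ R) (r : ℕ)
    (u : ι' ≃ ι) (v : κ' ≃ κ) :
    detIdeal (M.submatrix u v) r = detIdeal M r := by
  refine le_antisymm (detIdeal_submatrix_le M r u.injective v.injective) ?_
  simpa using detIdeal_submatrix_le (M.submatrix u v) r u.symm.injective v.symm.injective

theorem detIdeal_transpose_le {ι κ : Type*} (M : Matrix ι κ R) (r : ℕ) :
    detIdeal Mᵀ r ≤ detIdeal M r := by
  rw [detIdeal, Ideal.span_le]
  rintro _ ⟨f, g, hf, hg, rfl⟩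
  exact Ideal.subset_span ⟨g, f, hg, hf, by rw [← transpose_submatrix, det_transpose]⟩

theorem detIdeal_transpose {ι κ : Type*} (M : Matrix ι κ R) (r : ℕ) :
    detIdeal Mᵀ r = detIdeal M r :=
  le_antisymm (detIdeal_transpose_le M r) (by simpa using detIdeal_transpose_le Mᵀ r)

theorem detIdeal_mul_left_le {ι κ n : Type*} [Fintype n] (A : Matrix ι n R)
    (M : Matrix n κ R) (r : ℕ) : detIdeal (A * M) r ≤ detIdeal M r := by
  rw [detIdeal, Ideal.span_le]
  rintro _ ⟨f, g, hf, hg, rfl⟩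
  rw [submatrix_mul _ _ f id g Function.bijective_id, det_mul_eq_sum_prod_mul_det_submatrix]
  refine Ideal.sum_mem _ fun p _ => Ideal.mul_mem_left _ _ ?_
  by_cases hp : Function.Injective p
  · exact Ideal.subset_span ⟨p, g, hp, hg, rfl⟩
  · obtain ⟨i, j, hij, hne⟩ := Function.not_injective_iff.1 hp
    rw [det_zero_of_row_eq hne (by ext; simp [hij])]
    exact zero_mem _

theorem detIdeal_mul_right_le {ι κ n : Type*} [Fintype n] (M : Matrix ι n R)
    (B : Matrix n κ R) (r : ℕ) : detIdeal (M * B) r ≤ detIdeal M r := by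
  rw [← detIdeal_transpose (M * B), ← detIdeal_transpose M, transpose_mul]
  exact detIdeal_mul_left_le _ _ r

theorem detIdeal_mul_mul_le {ι κ m n : Type*} [Fintype m] [Fintype n] (P : Matrix ι m R)
    (M : Matrix m n R) (Q : Matrix n κ R) (r : ℕ) : detIdeal (P * M * Q) r ≤ detIdeal M r :=
  (detIdeal_mul_right_le _ _ r).trans (detIdeal_mul_left_le _ _ r)

theorem detIdeal_mul_mul_of_isUnit {m n : Type*} [Fintype m] [DecidableEq m] [Fintype n]
    [DecidableEq n] {P : Matrix m m R} {Q : Matrix n n R} (hP : IsUnit P) (hQ : IsUnit Q)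
    (M : Matrix m n R) (r : ℕ) : detIdeal (P * M * Q) r = detIdeal M r := by
  obtain ⟨P', hP'⟩ := hP.exists_left_inv
  obtain ⟨Q', hQ'⟩ := hQ.exists_right_inv
  have hM : P' * (P * M * Q) * Q' = M := by
    rw [← Matrix.mul_assoc, ← Matrix.mul_assoc, hP', Matrix.one_mul, Matrix.mul_assoc, hQ',
      Matrix.mul_one]
  refine le_antisymm (detIdeal_mul_mul_le P M Q r) ?_
  calc detIdeal M r = detIdeal (P' * (P * M * Q) * Q') r := by rw [hM]
    _ ≤ detIdeal (P * M * Q) r := detIdeal_mul_mul_le _ _ _ r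

def distinctProdIdeal {ι : Type*} (d : ι → R) (r : ℕ) : Ideal R :=
  Ideal.span (Set.range fun t : {t : Fin (r + 1) → ι // Function.Injective t} => ∏ i, d (t.1 i))

theorem prod_fromBlocks_diagonal_eq_zero_or {ι α β κ : Type*} [DecidableEq ι] [Fintype κ]
    (d : ι → R) (f : κ → ι ⊕ α) {g : κ → ι ⊕ β} (hg : Function.Injective g) :
    ∏ i, (fromBlocks (diagonal d) 0 0 0 : Matrix (ι ⊕ α) (ι ⊕ β) R) (f i) (g i) = 0 ∨
      ∃ t : κ → ι, Function.Injective t ∧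
        ∏ i, (fromBlocks (diagonal d) 0 0 0 : Matrix (ι ⊕ α) (ι ⊕ β) R) (f i) (g i) =
          ∏ i, d (t i) := by
  by_cases h : ∀ i, ∃ t, f i = Sum.inl t ∧ g i = Sum.inl t
  · choose t ht using h
    refine Or.inr ⟨t, fun i j hij => hg ?_, Finset.prod_congr rfl fun i _ => ?_⟩
    · rw [(ht i).2, (ht j).2, hij]
    · simp [(ht i).1, (ht i).2]
  · push Not at h
    obtain ⟨i, hi⟩ := h
    refine Or.inl (Finset.prod_eq_zero (Finset.mem_univ i) ?_)
    revert hi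
    cases f i <;> cases g i <;> intro hi <;> simp_all [eq_comm]

theorem detIdeal_fromBlocks_diagonal {ι α β : Type*} [DecidableEq ι] (d : ι → R) (r : ℕ) :
    detIdeal (fromBlocks (diagonal d) 0 0 0 : Matrix (ι ⊕ α) (ι ⊕ β) R) r =
      distinctProdIdeal d r := by
  apply le_antisymm
  · rw [detIdeal, Ideal.span_le]
    rintro _ ⟨f, g, -, hg, rfl⟩
    rw [det_apply']
    refine Ideal.sum_mem _ fun σ _ => Ideal.mul_mem_left _ _ ?_
    rcases prod_fromBlocks_diagonal_eq_zero_or d (f ∘ σ) hg with h0 | ⟨t, ht, heq⟩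
    · exact h0 ▸ zero_mem _
    · exact heq ▸ Ideal.subset_span ⟨⟨t, ht⟩, rfl⟩
  · rw [distinctProdIdeal, Ideal.span_le]
    rintro _ ⟨⟨t, ht⟩, rfl⟩
    refine Ideal.subset_span ⟨Sum.inl ∘ t, Sum.inl ∘ t, Sum.inl_injective.comp ht,
      Sum.inl_injective.comp ht, ?_⟩
    have hsub : (fromBlocks (diagonal d) 0 0 0 : Matrix (ι ⊕ α) (ι ⊕ β) R).submatrix
        (Sum.inl ∘ t) (Sum.inl ∘ t) = diagonal (d ∘ t) := by
      rw [← submatrix_diagonal d t ht]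
      rfl
    rw [hsub, det_diagonal]
    rfl

theorem detIdeal_blockDiag_s8 {q p l : ℕ} (hq : l ≤ q) (hp : l ≤ p) (d : Fin l → R) (r : ℕ) :
    detIdeal (_root_.blockDiag hq hp d) r = distinctProdIdeal d r := by
  rw [_root_.blockDiag, reindex_apply, detIdeal_submatrix_equiv, detIdeal_fromBlocks_diagonal]

theorem dvd_of_le_of_dvd_succ {l : ℕ} {d : Fin l → R}
    (hd : ∀ (i : Fin l) (hi : (i : ℕ) + 1 < l), d i ∣ d ⟨(i : ℕ) + 1, hi⟩) {i j : Fin l}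
    (hij : i ≤ j) : d i ∣ d j := by
  -- Extended by `0` beyond `l`, `d` becomes a divisibility chain indexed by all of `ℕ`.
  let D : ℕ → R := fun n => if h : n < l then d ⟨n, h⟩ else 0
  have hD : ∀ n, D n ∣ D (n + 1) := fun n => by
    by_cases hn : n + 1 < l
    · simpa [D, hn, Nat.lt_of_succ_lt hn] using hd ⟨n, Nat.lt_of_succ_lt hn⟩ hn
    · simp [D, hn]
  simpa [D] using Nat.rel_of_forall_rel_succ_of_le (· ∣ ·) hD (Fin.le_iff_val_le_val.1 hij)

theorem Fin.val_le_val_of_strictMono {k l : ℕ} {s : Fin k → Fin l} (hs : StrictMono s)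
    (i : Fin k) : (i : ℕ) ≤ s i := by
  simpa using Finset.card_le_card_of_injOn s (s := Finset.Iio i) (t := Finset.Iio (s i))
    (fun j hj => by simpa using hs (by simpa using hj)) hs.injective.injOn

theorem prod_castLE_dvd_prod_of_injective {l k : ℕ} {d : Fin l → R}
    (hd : ∀ (i : Fin l) (hi : (i : ℕ) + 1 < l), d i ∣ d ⟨(i : ℕ) + 1, hi⟩) (hk : k ≤ l)
    {t : Fin k → Fin l} (ht : Function.Injective t) :
    ∏ i, d (Fin.castLE hk i) ∣ ∏ i, d (t i) := by
  have hsorted : StrictMono (t ∘ Tuple.sort t) :=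
    (Tuple.monotone_sort t).strictMono_of_injective (ht.comp (Tuple.sort t).injective)
  rw [← Equiv.prod_comp (Tuple.sort t) fun i => d (t i)]
  exact Finset.prod_dvd_prod_of_dvd _ _ fun i _ =>
    dvd_of_le_of_dvd_succ hd (Fin.le_iff_val_le_val.2 (Fin.val_le_val_of_strictMono hsorted i))

theorem distinctProdIdeal_eq_span_prod_castLE {l r : ℕ} {d : Fin l → R}
    (hd : ∀ (i : Fin l) (hi : (i : ℕ) + 1 < l), d i ∣ d ⟨(i : ℕ) + 1, hi⟩) (hr : r < l) :
    distinctProdIdeal d r = Ideal.span {∏ i : Fin (r + 1), d (Fin.castLE hr i)} := by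
  apply le_antisymm
  · rw [distinctProdIdeal, Ideal.span_le]
    rintro _ ⟨⟨t, ht⟩, rfl⟩
    exact Ideal.mem_span_singleton.2 (prod_castLE_dvd_prod_of_injective hd hr ht)
  · rw [Ideal.span_singleton_le_iff_mem]
    exact Ideal.subset_span ⟨⟨Fin.castLE hr, Fin.castLE_injective hr⟩, rfl⟩

theorem distinctProdIdeal_eq_bot {l r : ℕ} (d : Fin l → R) (hr : l ≤ r) :
    distinctProdIdeal d r = ⊥ := by
  have : IsEmpty {t : Fin (r + 1) → Fin l // Function.Injective t} :=
    ⟨fun t => absurd (Fin.le_of_injective t.1 t.2) (by omega)⟩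
  rw [distinctProdIdeal, Set.range_eq_empty, Ideal.span_empty]

end

/-- Every determinantal ideal of a diagonalizable matrix is principal:
`I_r M = ⟨d 0 ⋯ d r⟩` for `r < l` and `I_r M = 0` for `r ≥ l`. -/
theorem detIdeal_of_isDiagonalizableWithChain {R : Type*} [CommRing R] {q p : ℕ}
    (M : Matrix (Fin q) (Fin p) R) (l : ℕ) (d : Fin l → R)
    (h : IsDiagonalizableWithChain M l d) :
    (∀ (r : ℕ) (hr : r < l), detIdeal M r =
      Ideal.span {∏ i : Fin (r + 1), d (Fin.castLE hr i)}) ∧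
    (∀ r : ℕ, l ≤ r → detIdeal M r = ⊥) := by
  obtain ⟨hq, hp, P, Q, hP, hQ, -, hd, hPMQ⟩ := h
  have hM : ∀ r, detIdeal M r = distinctProdIdeal d r := fun r => by
    rw [← detIdeal_mul_mul_of_isUnit hP hQ, hPMQ, detIdeal_blockDiag_s8]
  exact ⟨fun r hr => (hM r).trans (distinctProdIdeal_eq_span_prod_castLE hd hr),
    fun r hr => (hM r).trans (distinctProdIdeal_eq_bot d hr)⟩
end

section
/- Let R be an integral domain and let M be a q×p matrix over R that is diagonalizable with divisibility chain p_0, …, p_{l-1} (all p_i nonzero). Regard M as the R-linear map Matrix.toLin' M : R^p → R^q. Then the kernel of this linear map is a free R-module of rank p − l, and it is a direct summand of R^p (i.e. it admits a complementary submodule). -/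
/-!
Write `P * M * Q = D` with `D` the block-diagonal matrix. Since `P` and `Q` are invertible,
`ker M = Q (ker D)`. Splitting `R^p = R^l × R^(p-l)` along the blocks of `D`, the map `D`
multiplies the first factor coordinatewise by the nonzero `d i` and kills the second; over a
domain this makes `ker D` exactly the second factor, which is free of rank `p - l` and has
the first factor as a complement. Both properties are carried over to `ker M` by `Q`.
-/

open scoped Matrix
open LinearMap

section Semiring

variable {R : Type*} [Semiring R]

variable (R) in
noncomputable def finSplitLinearEquiv {l n : ℕ} (h : l ≤ n) :
    ((Fin l → R) × (Fin (n - l) → R)) ≃ₗ[R] (Fin n → R) :=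
  (LinearEquiv.sumPiEquivProdPi R (Fin l) (Fin (n - l)) fun _ => R).symm.trans
    (LinearEquiv.funCongrLeft R R (finSumFinEquiv.trans (finCongr (Nat.add_sub_cancel' h))).symm)

theorem finSplitLinearEquiv_apply {l n : ℕ} (h : l ≤ n) (x : Fin l → R) (y : Fin (n - l) → R) :
    finSplitLinearEquiv R h (x, y) =
      Sum.elim x y ∘ (finSumFinEquiv.trans (finCongr (Nat.add_sub_cancel' h))).symm :=
  rfl

theorem exists_basis_and_isCompl_map_range_inr {κ M₁ M₂ V : Type*} [AddCommMonoid M₁]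
    [Module R M₁] [AddCommMonoid M₂] [Module R M₂] [AddCommMonoid V] [Module R V]
    (b : Module.Basis κ R M₂) (G : (M₁ × M₂) ≃ₗ[R] V) :
    Nonempty (Module.Basis κ R ((range (inr R M₁ M₂)).map G.toLinearMap)) ∧
      ∃ N : Submodule R V, IsCompl ((range (inr R M₁ M₂)).map G.toLinearMap) N :=
  ⟨⟨b.map ((LinearEquiv.ofInjective _ inr_injective).trans (G.submoduleMap _))⟩,
    _, ((Submodule.orderIsoMapComap G).isCompl isCompl_range_inl_inr).symm⟩

end Semiring

section CommRing

variable {R : Type*} [CommRing R]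

theorem ker_toLin'_eq_map_ker_toLin'_mul_mul {m n : Type*} [Fintype m] [DecidableEq m]
    [Fintype n] [DecidableEq n] {P : Matrix m m R} {Q : Matrix n n R} (hP : IsUnit P)
    (hQ : IsUnit Q) (M : Matrix m n R) :
    ker (Matrix.toLin' M) = (ker (Matrix.toLin' (P * M * Q))).map (Matrix.toLin' Q) := by
  have hP_inj : Function.Injective (Matrix.toLin' P) :=
    ((Module.End.isUnit_iff _).mp (Matrix.isUnit_toLin'_iff.mpr hP)).injective
  have hQ_surj : Function.Surjective (Matrix.toLin' Q) :=
    ((Module.End.isUnit_iff _).mp (Matrix.isUnit_toLin'_iff.mpr hQ)).surjective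
  rw [Matrix.toLin'_mul, Matrix.toLin'_mul, ker_comp,
    ker_comp_of_ker_eq_bot _ (ker_eq_bot.mpr hP_inj), Submodule.map_comap_eq_of_surjective hQ_surj]

theorem blockDiag_mulVec_finSplitLinearEquiv {q p l : ℕ} (hq : l ≤ q) (hp : l ≤ p)
    (d x : Fin l → R) (y : Fin (p - l) → R) :
    blockDiag hq hp d *ᵥ finSplitLinearEquiv R hp (x, y) = finSplitLinearEquiv R hq (d * x, 0) := by
  rw [blockDiag, Matrix.reindex_apply, Matrix.submatrix_mulVec_equiv, finSplitLinearEquiv_apply,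
    finSplitLinearEquiv_apply, Function.comp_assoc, Equiv.symm_symm, Equiv.symm_comp_self,
    Function.comp_id, Matrix.fromBlocks_mulVec]
  congr 1
  ext (i | i) <;> simp [Matrix.mulVec_diagonal]

theorem ker_toLin'_blockDiag [NoZeroDivisors R] {q p l : ℕ} (hq : l ≤ q) (hp : l ≤ p)
    {d : Fin l → R} (hd : ∀ i, d i ≠ 0) :
    ker (Matrix.toLin' (blockDiag hq hp d)) =
      (range (inr R _ _)).map (finSplitLinearEquiv R hp).toLinearMap := by
  ext z
  obtain ⟨⟨x, y⟩, rfl⟩ := (finSplitLinearEquiv R hp).surjective z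
  rw [Submodule.mem_map_equiv, LinearEquiv.symm_apply_apply, ← ker_fst, mem_ker, mem_ker,
    Matrix.toLin'_apply, blockDiag_mulVec_finSplitLinearEquiv, LinearEquiv.map_eq_zero_iff]
  simp [funext_iff, hd]

end CommRing

/-- Over a domain, the kernel of a matrix that is diagonalizable with a (nonzero)
divisibility chain of length `l` is a free module of rank `p - l` and is a direct summand
of `R^p`. -/
theorem ker_of_isDiagonalizableWithChain {R : Type*} [CommRing R] [IsDomain R] {q p : ℕ}
    (M : Matrix (Fin q) (Fin p) R) (l : ℕ) (d : Fin l → R)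
    (h : IsDiagonalizableWithChain M l d) :
    Nonempty (Module.Basis (Fin (p - l)) R (LinearMap.ker (Matrix.toLin' M))) ∧
    ∃ N : Submodule R (Fin p → R), IsCompl (LinearMap.ker (Matrix.toLin' M)) N := by
  obtain ⟨hq, hp, P, Q, hP, hQ, hd, -, hPMQ⟩ := h
  have hQ_bij : Function.Bijective (Matrix.toLin' Q) :=
    (Module.End.isUnit_iff _).mp (Matrix.isUnit_toLin'_iff.mpr hQ)
  have hker : ker (Matrix.toLin' M) = (range (inr R _ _)).map
      ((finSplitLinearEquiv R hp).trans (LinearEquiv.ofBijective _ hQ_bij)).toLinearMap := by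
    rw [ker_toLin'_eq_map_ker_toLin'_mul_mul hP hQ, hPMQ, ker_toLin'_blockDiag hq hp hd,
      LinearEquiv.coe_trans, Submodule.map_comp]
    rfl
  rw [hker]
  exact exists_basis_and_isCompl_map_range_inr (Pi.basisFun R _) _
end
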